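/- arXiv:2002.12920 — 2 statements merged into one kernel-verified Lean document; each statement's English description precedes it below -/
import Mathlib

section
/- Let w₁,…,w_n be words with embeddings e(w_t) ∈ ℝ^d, substitution sets S(w_t) (finite, possibly empty), budget δ, coefficient matrices W̃_t ∈ ℝ^{m×d}, and bias b ∈ ℝ^m. Define the DP values g̲_{i,j} ∈ ℝ^m coordinatewise by g̲_{i,0} = b + Σ_{t≤i} W̃_t e(w_t), and for i, j > 0: g̲_{i,j} = min( g̲_{i−1,j} + W̃_i e(w_i), g̲_{i−1,j−1} + min_{w' ∈ S(w_i)} W̃_i e(w') ) (min taken coordinatewise over the relevant set). Then the coordinatewise minimum of b + Σ_t W̃_t e(ŵ_t) over all choices of ŵ_t ∈ {w_t} ∪ S(w_t) with at most δ substitutions equals min_{j=0}^{δ} g̲_{n,j}. -/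
open scoped Classical

/-- DP table for concretizing a linear lower bound under synonym-based word
substitution: `wordSubDP m d v Sub W b i j k` is the coordinate-`k` lower bound
of `b + ∑_{t<i} W̃_t e(ŵ_t)` when at most `j` of the first `i` words are replaced. -/
noncomputable def wordSubDP (m d : ℕ) (v : ℕ → Fin d → ℝ) (Sub : ℕ → Finset (Fin d → ℝ))
    (W : ℕ → Matrix (Fin m) (Fin d) ℝ) (b : Fin m → ℝ) : ℕ → ℕ → Fin m → ℝ
  | 0, _ => b
  | i + 1, 0 => fun k => wordSubDP m d v Sub W b i 0 k + (W i).mulVec (v i) k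
  | i + 1, j + 1 => fun k =>
      if hne : (Sub i).Nonempty then
        min (wordSubDP m d v Sub W b i (j + 1) k + (W i).mulVec (v i) k)
          (wordSubDP m d v Sub W b i j k + (Sub i).inf' hne fun w' => (W i).mulVec w' k)
      else wordSubDP m d v Sub W b i (j + 1) k + (W i).mulVec (v i) k

lemma dp_lower (m d : ℕ) (v : ℕ → Fin d → ℝ) (Sub : ℕ → Finset (Fin d → ℝ))
    (W : ℕ → Matrix (Fin m) (Fin d) ℝ) (b : Fin m → ℝ) (k : Fin m) :
    ∀ n j (w : ℕ → Fin d → ℝ), (∀ t < n, w t = v t ∨ w t ∈ Sub t) →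
      ((Finset.range n).filter fun t => w t ≠ v t).card ≤ j →
      wordSubDP m d v Sub W b n j k ≤ b k + ∑ t ∈ Finset.range n, (W t).mulVec (w t) k := by
  intro n
  induction n with
  | zero => intro j w _ _; cases j <;> simp [wordSubDP]
  | succ n ih =>
    intro j w hadm hcard
    rw [Finset.sum_range_succ, ← add_assoc]
    by_cases hw : w n = v n
    · have hfilter : ((Finset.range (n+1)).filter fun t => w t ≠ v t)
          = ((Finset.range n).filter fun t => w t ≠ v t) := by
        rw [Finset.range_add_one, Finset.filter_insert]
        simp [hw]
      rw [hfilter] at hcard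
      have ihw := ih j w (fun t ht => hadm t (Nat.lt_succ_of_lt ht)) hcard
      have key : wordSubDP m d v Sub W b (n+1) j k
          ≤ wordSubDP m d v Sub W b n j k + (W n).mulVec (v n) k := by
        cases j with
        | zero => simp [wordSubDP]
        | succ j =>
          simp only [wordSubDP]
          split
          · exact min_le_left _ _
          · exact le_refl _
      calc wordSubDP m d v Sub W b (n+1) j k
          ≤ wordSubDP m d v Sub W b n j k + (W n).mulVec (v n) k := key
        _ ≤ (b k + ∑ t ∈ Finset.range n, (W t).mulVec (w t) k) + (W n).mulVec (v n) k := by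
            linarith
        _ = _ := by rw [hw]
    · have hmem : w n ∈ Sub n := (hadm n (Nat.lt_succ_self n)).resolve_left hw
      have hne : (Sub n).Nonempty := ⟨_, hmem⟩
      have hfilter : ((Finset.range (n+1)).filter fun t => w t ≠ v t)
          = insert n ((Finset.range n).filter fun t => w t ≠ v t) := by
        rw [Finset.range_add_one, Finset.filter_insert, if_pos hw]
      have hn_not : n ∉ (Finset.range n).filter fun t => w t ≠ v t := by simp
      rw [hfilter, Finset.card_insert_of_notMem hn_not] at hcard
      obtain ⟨j', rfl⟩ : ∃ j', j = j' + 1 := ⟨j - 1, by omega⟩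
      have hcard' : ((Finset.range n).filter fun t => w t ≠ v t).card ≤ j' := by omega
      have ihw := ih j' w (fun t ht => hadm t (Nat.lt_succ_of_lt ht)) hcard'
      have hinf : (Sub n).inf' hne (fun w' => (W n).mulVec w' k) ≤ (W n).mulVec (w n) k :=
        Finset.inf'_le _ hmem
      simp only [wordSubDP, dif_pos hne]
      calc min (wordSubDP m d v Sub W b n (j'+1) k + (W n).mulVec (v n) k)
            (wordSubDP m d v Sub W b n j' k + (Sub n).inf' hne fun w' => (W n).mulVec w' k)
          ≤ wordSubDP m d v Sub W b n j' k + (Sub n).inf' hne fun w' => (W n).mulVec w' k :=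
            min_le_right _ _
        _ ≤ _ := by linarith


lemma dp_attained (m d : ℕ) (v : ℕ → Fin d → ℝ) (Sub : ℕ → Finset (Fin d → ℝ))
    (W : ℕ → Matrix (Fin m) (Fin d) ℝ) (b : Fin m → ℝ) (k : Fin m) :
    ∀ n j, ∃ w : ℕ → Fin d → ℝ, (∀ t < n, w t = v t ∨ w t ∈ Sub t) ∧
      ((Finset.range n).filter fun t => w t ≠ v t).card ≤ j ∧
      b k + ∑ t ∈ Finset.range n, (W t).mulVec (w t) k = wordSubDP m d v Sub W b n j k := by
  intro n
  induction n with
  | zero => intro j; exact ⟨v, by simp, by simp, by cases j <;> simp [wordSubDP]⟩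
  | succ n ih =>
    intro j
    -- generic extension construction
    have ext : ∀ (j' : ℕ) (x : Fin d → ℝ), (x = v n ∨ x ∈ Sub n) →
        ∃ w : ℕ → Fin d → ℝ, (∀ t < n + 1, w t = v t ∨ w t ∈ Sub t) ∧
          ((Finset.range (n+1)).filter fun t => w t ≠ v t).card
            ≤ ((if x = v n then 0 else 1) + j') ∧
          b k + ∑ t ∈ Finset.range (n+1), (W t).mulVec (w t) k
            = wordSubDP m d v Sub W b n j' k + (W n).mulVec x k := by
      intro j' x hx
      obtain ⟨w, hadm, hcard, hsum⟩ := ih j'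
      refine ⟨fun t => if t = n then x else w t, ?_, ?_, ?_⟩
      · intro t ht
        by_cases h : t = n
        · simpa [h] using hx
        · simpa [h] using hadm t (by omega)
      · have hfe : ((Finset.range n).filter fun t =>
            (if t = n then x else w t) ≠ v t) = (Finset.range n).filter fun t => w t ≠ v t := by
          apply Finset.filter_congr
          intro t ht
          simp only [Finset.mem_range] at ht
          simp [Nat.ne_of_lt ht]
        rw [Finset.range_add_one, Finset.filter_insert, hfe]
        by_cases hxv : x = v n
        · rw [if_neg (by simp [hxv]), if_pos hxv]
          omega
        · rw [if_pos (by simp [hxv] : (if n = n then x else w n) ≠ v n),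
            Finset.card_insert_of_notMem (by simp), if_neg hxv]
          omega
      · rw [Finset.sum_range_succ]
        have hse : ∑ t ∈ Finset.range n,
            (W t).mulVec (if t = n then x else w t) k
            = ∑ t ∈ Finset.range n, (W t).mulVec (w t) k := by
          apply Finset.sum_congr rfl
          intro t ht
          simp only [Finset.mem_range] at ht
          simp [Nat.ne_of_lt ht]
        beta_reduce
        rw [hse, if_pos rfl, ← add_assoc, hsum]
    cases j with
    | zero =>
      obtain ⟨w, h1, h2, h3⟩ := ext 0 (v n) (Or.inl rfl)
      exact ⟨w, h1, by simpa using h2, by simpa [wordSubDP] using h3⟩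
    | succ j =>
      by_cases hne : (Sub n).Nonempty
      · rcases le_total
            (wordSubDP m d v Sub W b n (j+1) k + (W n).mulVec (v n) k)
            (wordSubDP m d v Sub W b n j k + (Sub n).inf' hne fun w' => (W n).mulVec w' k)
            with hle | hle
        · obtain ⟨w, h1, h2, h3⟩ := ext (j+1) (v n) (Or.inl rfl)
          refine ⟨w, h1, by simpa using h2, ?_⟩
          simp only [wordSubDP, dif_pos hne, min_eq_left hle]
          simpa using h3
        · obtain ⟨x, hxmem, hxeq⟩ := Finset.exists_mem_eq_inf' hne fun w' => (W n).mulVec w' k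
          obtain ⟨w, h1, h2, h3⟩ := ext j x (Or.inr hxmem)
          refine ⟨w, h1, le_trans h2 (by split <;> omega), ?_⟩
          simp only [wordSubDP, dif_pos hne, min_eq_right hle]
          rw [h3, hxeq]
      · obtain ⟨w, h1, h2, h3⟩ := ext (j+1) (v n) (Or.inl rfl)
        refine ⟨w, h1, by simpa using h2, ?_⟩
        simp only [wordSubDP, dif_neg hne]
        simpa using h3


/-- Theorem 2 (DP concretization for synonym substitution): the coordinatewise
minimum over all substitution choices with budget δ equals the minimum of the DP
values `g_{n,j}` over `0 ≤ j ≤ δ`. -/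
theorem word_substitution_dp (n m d δ : ℕ) (v : ℕ → Fin d → ℝ)
    (Sub : ℕ → Finset (Fin d → ℝ)) (W : ℕ → Matrix (Fin m) (Fin d) ℝ)
    (b : Fin m → ℝ) (k : Fin m) :
    sInf {r : ℝ | ∃ w : ℕ → Fin d → ℝ,
        (∀ t < n, w t = v t ∨ w t ∈ Sub t) ∧
        ((Finset.range n).filter fun t => w t ≠ v t).card ≤ δ ∧
        r = b k + ∑ t ∈ Finset.range n, (W t).mulVec (w t) k}
      = (Finset.range (δ + 1)).inf' (by simp) fun j => wordSubDP m d v Sub W b n j k := by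
  refine le_antisymm ?_ ?_
  · obtain ⟨j₀, hj₀mem, hj₀eq⟩ := Finset.exists_mem_eq_inf'
      (show (Finset.range (δ+1)).Nonempty by simp)
      (fun j => wordSubDP m d v Sub W b n j k)
    obtain ⟨w, h1, h2, h3⟩ := dp_attained m d v Sub W b k n j₀
    apply csInf_le
    · refine ⟨(Finset.range (δ + 1)).inf' (by simp) fun j => wordSubDP m d v Sub W b n j k, ?_⟩
      rintro r ⟨w', hw1, hw2, rfl⟩
      calc (Finset.range (δ + 1)).inf' (by simp) (fun j => wordSubDP m d v Sub W b n j k)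
          ≤ wordSubDP m d v Sub W b n δ k := Finset.inf'_le _ (by simp)
        _ ≤ _ := dp_lower m d v Sub W b k n δ w' hw1 hw2
    · refine ⟨w, h1, le_trans h2 ?_, by rw [← h3] at hj₀eq; exact hj₀eq⟩
      simp only [Finset.mem_range] at hj₀mem
      omega
  · refine le_csInf ⟨_, v, fun t _ => Or.inl rfl, by simp, rfl⟩ ?_
    rintro r ⟨w', hw1, hw2, rfl⟩
    calc (Finset.range (δ + 1)).inf' (by simp) (fun j => wordSubDP m d v Sub W b n j k)
        ≤ wordSubDP m d v Sub W b n δ k := Finset.inf'_le _ (by simp)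
      _ ≤ _ := dp_lower m d v Sub W b k n δ w' hw1 hw2
end

section
/- The backward-mode LiRPA invariant is preserved by one propagation step: suppose Σ_k A_k h_k(x) + d ≤ h_o(x) for all x ∈ S (a finite sum over nodes), and suppose for node i we have Σ_{j ∈ u(i)} Λ_j h_j(x) + Δ ≤ A_i h_i(x) for all x ∈ S. Then replacing A_i by 0, adding Λ_j to A_j for each j ∈ u(i), and adding Δ to d yields coefficients A'_k, d' still satisfying Σ_k A'_k h_k(x) + d' ≤ h_o(x) for all x ∈ S. -/
lemma sum_if_eq_sub {V : Type*} [Fintype V] [DecidableEq V] (i : V) (g : V → ℝ) :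
    ∑ k, (if k = i then 0 else g k) = ∑ k, g k - g i := by
  rw [← Finset.add_sum_erase _ g (Finset.mem_univ i),
      ← Finset.add_sum_erase _ (fun k => if k = i then 0 else g k) (Finset.mem_univ i)]
  rw [Finset.sum_congr rfl (fun k hk => if_neg (Finset.ne_of_mem_erase hk))]
  simp

/-- One step of backward-mode LiRPA bound propagation preserves the invariant. -/
theorem backward_step_invariant (V : Type*) [Fintype V] [DecidableEq V]
    (so : ℕ) (s : V → ℕ) (D : Type*) (S : Set D)
    (h : (k : V) → D → Fin (s k) → ℝ) (ho : D → Fin so → ℝ)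
    (A : (k : V) → Matrix (Fin so) (Fin (s k)) ℝ) (d : Fin so → ℝ)
    (hinv : ∀ x ∈ S, ∀ c, (∑ k, (A k).mulVec (h k x) + d) c ≤ ho x c)
    (i : V) (u : Finset V) (hiu : i ∉ u)
    (Λ : (j : V) → Matrix (Fin so) (Fin (s j)) ℝ) (Δ : Fin so → ℝ)
    (hstep : ∀ x ∈ S, ∀ c,
      ((∑ j ∈ u, (Λ j).mulVec (h j x)) + Δ) c ≤ (A i).mulVec (h i x) c)
    (A' : (k : V) → Matrix (Fin so) (Fin (s k)) ℝ) (d' : Fin so → ℝ)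
    (hA' : ∀ k, A' k = (if k = i then 0 else A k) + (if k ∈ u then Λ k else 0))
    (hd' : d' = d + Δ) :
    ∀ x ∈ S, ∀ c, (∑ k, (A' k).mulVec (h k x) + d') c ≤ ho x c := by
  intro x hx c
  have key : (∑ k, (A' k).mulVec (h k x)) c
      = (∑ k, (A k).mulVec (h k x)) c - (A i).mulVec (h i x) c
        + (∑ j ∈ u, (Λ j).mulVec (h j x)) c := by
    have e1 : ∀ k, (A' k).mulVec (h k x) c
        = (if k = i then 0 else (A k).mulVec (h k x) c)
          + (if k ∈ u then (Λ k).mulVec (h k x) c else 0) := by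
      intro k
      rw [hA' k, Matrix.add_mulVec]
      simp only [Pi.add_apply]
      congr 1
      · rw [apply_ite (fun M : Matrix (Fin so) (Fin (s k)) ℝ => M.mulVec (h k x) c)]
        simp
      · rw [apply_ite (fun M : Matrix (Fin so) (Fin (s k)) ℝ => M.mulVec (h k x) c)]
        simp
    simp only [Finset.sum_apply, e1]
    rw [Finset.sum_add_distrib, sum_if_eq_sub, Finset.sum_ite_mem, Finset.univ_inter]
  have h1 := hinv x hx c
  have h2 := hstep x hx c
  simp only [Pi.add_apply, Finset.sum_apply] at h1 h2 ⊢
  rw [hd']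
  simp only [Finset.sum_apply, Pi.add_apply] at key
  simp only [Pi.add_apply, key]
  linarith
end
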